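/- In the Johnson graph J(N,R) (vertices are R-subsets of an N-set, edges between subsets with intersection of size R-1), the graph is regular of degree R·(N-R), and its spectral gap (difference between the two largest eigenvalues of its normalized transition matrix) equals N / (R·(N-R)). -/
import Mathlib


open Finset

/-- Vertices of the Johnson graph `J(N,R)`: `R`-subsets of an `N`-set. -/
abbrev JohnsonVertex (N R : ℕ) := {s : Finset (Fin N) // s.card = R}

/-- Adjacency in the Johnson graph: two distinct `R`-subsets meeting in `R-1` elements. -/
def johnsonAdj (N R : ℕ) (s t : JohnsonVertex N R) : Prop :=
  s ≠ t ∧ ((s : Finset (Fin N)) ∩ (t : Finset (Fin N))).card = R - 1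

instance (N R : ℕ) (s t : JohnsonVertex N R) : Decidable (johnsonAdj N R s t) := by
  unfold johnsonAdj; infer_instance

/-- Normalized transition matrix of the random walk on `J(N,R)`. -/
noncomputable def johnsonWalk (N R : ℕ) : Matrix (JohnsonVertex N R) (JohnsonVertex N R) ℝ :=
  fun s t => if johnsonAdj N R s t then ((R * (N - R) : ℕ) : ℝ)⁻¹ else 0

open Matrix

namespace JP

noncomputable def adjM (N R : ℕ) : Matrix (JohnsonVertex N R) (JohnsonVertex N R) ℝ :=
  fun s t => if johnsonAdj N R s t then 1 else 0

noncomputable def incM (N R : ℕ) : Matrix (JohnsonVertex N (R+1)) (JohnsonVertex N R) ℝ :=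
  fun s u => if (u : Finset (Fin N)) ⊆ (s : Finset (Fin N)) then 1 else 0

lemma L0 (N k : ℕ) (s : Finset (Fin N)) :
    (univ.filter (fun u : JohnsonVertex N k => (u : Finset (Fin N)) ⊆ s)).card
      = s.card.choose k := by
  rw [← Finset.card_powersetCard]
  refine Finset.card_bij (fun u _ => (u : Finset (Fin N))) ?_ ?_ ?_
  · intro a ha
    simp only [mem_filter, mem_univ, true_and] at ha
    rw [Finset.mem_powersetCard]; exact ⟨ha, a.2⟩
  · intro a _ b _ h; exact Subtype.ext h
  · intro b hb
    rw [Finset.mem_powersetCard] at hb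
    exact ⟨⟨b, hb.2⟩, by simp [hb.1], rfl⟩

lemma L1 (N R : ℕ) (u : Finset (Fin N)) (h : u.card ≤ R) :
    (univ.filter (fun t : JohnsonVertex N R => u ⊆ (t : Finset (Fin N)))).card
      = (N - u.card).choose (R - u.card) := by
  have hc : (uᶜ : Finset (Fin N)).card = N - u.card := by
    simp [Finset.card_compl]
  rw [← hc, ← Finset.card_powersetCard]
  refine Finset.card_bij (fun t _ => (t : Finset (Fin N)) \ u) ?_ ?_ ?_
  · intro a ha
    simp only [mem_filter, mem_univ, true_and] at ha
    rw [Finset.mem_powersetCard]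
    refine ⟨fun x hx => ?_, ?_⟩
    · rw [Finset.mem_sdiff] at hx; simpa using hx.2
    · rw [Finset.card_sdiff_of_subset ha, a.2]
  · intro a ha b hb hab
    simp only [mem_filter, mem_univ, true_and] at ha hb
    apply Subtype.ext
    have := congrArg (· ∪ u) hab
    simpa [Finset.sdiff_union_of_subset ha, Finset.sdiff_union_of_subset hb] using this
  · intro b hb
    rw [Finset.mem_powersetCard] at hb
    have hdisj : Disjoint b u := by
      rw [Finset.disjoint_right]; intro x hxu hxb
      have := hb.1 hxb; simp at this; exact this hxu
    refine ⟨⟨b ∪ u, ?_⟩, ?_, ?_⟩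
    · rw [Finset.card_union_of_disjoint hdisj, hb.2, Nat.sub_add_cancel h]
    · simp
    · exact Finset.union_sdiff_cancel_right hdisj

lemma Wrow (N R : ℕ) (s : JohnsonVertex N (R+1)) :
    (∑ u : JohnsonVertex N R, incM N R s u) = ((R : ℝ) + 1) := by
  simp only [incM]
  rw [Finset.sum_boole, L0]
  rw [s.2, Nat.choose_succ_self_right]
  push_cast; ring

lemma Wcol (N R : ℕ) (u : JohnsonVertex N R) :
    (∑ t : JohnsonVertex N (R+1), incM N R t u) = ((N - R : ℕ) : ℝ) := by
  simp only [incM]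
  rw [Finset.sum_boole, L1 N (R+1) _ (by rw [u.2]; omega)]
  rw [u.2]
  congr 1
  simp

lemma WWt (N R : ℕ) (s t : JohnsonVertex N (R+1)) :
    ((incM N R) * (incM N R)ᵀ) s t
      = ((((s : Finset (Fin N)) ∩ (t : Finset (Fin N))).card.choose R : ℕ) : ℝ) := by
  rw [Matrix.mul_apply]
  have h : ∀ u : JohnsonVertex N R,
      incM N R s u * (incM N R)ᵀ u t
        = if (u : Finset (Fin N)) ⊆ (s : Finset (Fin N)) ∩ (t : Finset (Fin N))
          then (1:ℝ) else 0 := by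
    intro u
    simp only [incM, Matrix.transpose_apply, Finset.subset_inter_iff]
    split_ifs with h1 h2 h3 h3 <;> simp_all
  rw [Finset.sum_congr rfl (fun u _ => h u), Finset.sum_boole, L0]

lemma I1 (N R : ℕ) :
    (incM N R) * (incM N R)ᵀ = adjM N (R+1) + (((R:ℝ)+1) • 1) := by
  ext s t
  rw [WWt]
  simp only [Matrix.add_apply, adjM, Matrix.smul_apply, Matrix.one_apply, smul_eq_mul]
  by_cases hst : s = t
  · subst hst
    have : (s : Finset (Fin N)) ∩ (s : Finset (Fin N)) = s := Finset.inter_self _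
    rw [this, s.2, Nat.choose_succ_self_right]
    have : ¬ johnsonAdj N (R+1) s s := fun h => h.1 rfl
    simp [this]
  · have hsub : ((s : Finset (Fin N)) ∩ t) ⊆ (s : Finset (Fin N)) := Finset.inter_subset_left
    have hle : ((s : Finset (Fin N)) ∩ t).card ≤ R := by
      by_contra hgt
      push_neg at hgt
      have hc : ((s : Finset (Fin N)) ∩ t).card = R + 1 := le_antisymm
        (le_trans (Finset.card_le_card hsub) (le_of_eq s.2)) hgt
      have : (s : Finset (Fin N)) ∩ t = s :=
        Finset.eq_of_subset_of_card_le hsub (by rw [hc, s.2])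
      have hst' : (s : Finset (Fin N)) ⊆ t := by
        rw [← this]; exact Finset.inter_subset_right
      exact hst (Subtype.ext (Finset.eq_of_subset_of_card_le hst' (by rw [s.2, t.2])))
    rcases eq_or_lt_of_le hle with heq | hlt
    · have hadj : johnsonAdj N (R+1) s t := ⟨hst, by simpa using heq⟩
      simp [hadj, heq, hst]
    · have hadj : ¬ johnsonAdj N (R+1) s t := by
        intro h
        rw [h.2] at hlt; omega
      rw [Nat.choose_eq_zero_of_lt hlt]
      simp [hadj, hst]

lemma I2 (N R : ℕ) :
    (incM N R)ᵀ * (incM N R) = adjM N R + (((N - R : ℕ) : ℝ) • 1) := by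
  ext u v
  rw [Matrix.mul_apply]
  have h : ∀ s : JohnsonVertex N (R+1),
      (incM N R)ᵀ u s * incM N R s v
        = if ((u : Finset (Fin N)) ∪ (v : Finset (Fin N))) ⊆ (s : Finset (Fin N))
          then (1:ℝ) else 0 := by
    intro s
    simp only [incM, Matrix.transpose_apply, Finset.union_subset_iff]
    split_ifs with h1 h2 h3 h3 <;> simp_all
  rw [Finset.sum_congr rfl (fun s _ => h s), Finset.sum_boole]
  simp only [Matrix.add_apply, adjM, Matrix.smul_apply, Matrix.one_apply, smul_eq_mul]
  by_cases huv : u = v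
  · subst huv
    have h1 : (u : Finset (Fin N)) ∪ (u : Finset (Fin N)) = u := Finset.union_self _
    rw [h1, L1 N (R+1) _ (by rw [u.2]; omega), u.2]
    have : ¬ johnsonAdj N R u u := fun h => h.1 rfl
    simp [this, Nat.succ_sub (le_refl R)]
  · have hcard : ((u:Finset (Fin N)) ∪ v).card + ((u:Finset (Fin N)) ∩ v).card = 2 * R := by
      rw [Finset.card_union_add_card_inter, u.2, v.2]; ring
    have hlt : ((u:Finset (Fin N)) ∩ v).card < R := by
      rcases lt_or_ge ((u:Finset (Fin N)) ∩ v).card R with h | h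
      · exact h
      · exfalso
        have hsub : ((u : Finset (Fin N)) ∩ v) ⊆ (u : Finset (Fin N)) := Finset.inter_subset_left
        have : (u : Finset (Fin N)) ∩ v = u := Finset.eq_of_subset_of_card_le hsub (by rw [u.2]; exact h)
        have huv' : (u : Finset (Fin N)) ⊆ v := by rw [← this]; exact Finset.inter_subset_right
        exact huv (Subtype.ext (Finset.eq_of_subset_of_card_le huv' (by rw [u.2, v.2])))
    by_cases hadj : johnsonAdj N R u v
    · have hc : ((u:Finset (Fin N)) ∪ v).card = R + 1 := by
        have := hadj.2; omega
      rw [L1 N (R+1) _ (by omega), hc]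
      simp [hadj, huv]
    · have hR1 : 1 ≤ R := by omega
      have hne : ((u:Finset (Fin N)) ∩ v).card ≠ R - 1 := fun h => hadj ⟨huv, h⟩
      have hc : R + 1 < ((u:Finset (Fin N)) ∪ v).card := by omega
      have : (univ.filter (fun s : JohnsonVertex N (R+1) =>
          ((u : Finset (Fin N)) ∪ (v : Finset (Fin N))) ⊆ (s : Finset (Fin N)))) = ∅ := by
        rw [Finset.filter_eq_empty_iff]
        intro s _ hsub
        have := Finset.card_le_card hsub
        rw [s.2] at this; omega
      rw [this]
      simp [hadj, huv]

/-- counting `R`-element subsets of an `(R+1)`-set containing a fixed element. -/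
lemma count_sub_mem (N R : ℕ) (s : JohnsonVertex N (R+1)) (i : Fin N)
    (hi : i ∈ (s : Finset (Fin N))) :
    (univ.filter (fun u : JohnsonVertex N R =>
      (u : Finset (Fin N)) ⊆ (s : Finset (Fin N)) ∧ i ∈ (u : Finset (Fin N)))).card = R := by
  have hsplit := Finset.card_filter_add_card_filter_not
    (s := univ.filter (fun u : JohnsonVertex N R => (u : Finset (Fin N)) ⊆ (s : Finset (Fin N))))
    (p := fun u : JohnsonVertex N R => i ∈ (u : Finset (Fin N)))
  rw [Finset.filter_filter, Finset.filter_filter] at hsplit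
  have hneg : (univ.filter (fun u : JohnsonVertex N R =>
      (u : Finset (Fin N)) ⊆ (s : Finset (Fin N)) ∧ i ∉ (u : Finset (Fin N)))).card
      = ((s : Finset (Fin N)).erase i).card.choose R := by
    rw [← L0]
    congr 1
    apply Finset.filter_congr
    intro u _
    simp only [Finset.subset_erase]
  rw [L0, s.2] at hsplit
  have hec : ((s : Finset (Fin N)).erase i).card = R := by
    rw [Finset.card_erase_of_mem hi, s.2]; rfl
  rw [hec] at hneg
  rw [hneg] at hsplit
  rw [Nat.choose_succ_self_right, Nat.choose_self] at hsplit
  omega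

/-- counting `(R+1)`-element supersets of an `R`-set containing a fixed element. -/
lemma count_sup_mem (N R : ℕ) (hRN : R + 1 ≤ N) (u : JohnsonVertex N R) (i : Fin N) :
    ((univ.filter (fun t : JohnsonVertex N (R+1) =>
      (u : Finset (Fin N)) ⊆ (t : Finset (Fin N)) ∧ i ∈ (t : Finset (Fin N)))).card : ℝ)
      = ((N - (R+1) : ℕ) : ℝ) * (if i ∈ (u : Finset (Fin N)) then 1 else 0) + 1 := by
  by_cases hi : i ∈ (u : Finset (Fin N))
  · have : (univ.filter (fun t : JohnsonVertex N (R+1) =>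
        (u : Finset (Fin N)) ⊆ (t : Finset (Fin N)) ∧ i ∈ (t : Finset (Fin N))))
        = (univ.filter (fun t : JohnsonVertex N (R+1) =>
        (u : Finset (Fin N)) ⊆ (t : Finset (Fin N)))) := by
      apply Finset.filter_congr
      intro t _
      simp only [and_iff_left_iff_imp]
      exact fun h => h hi
    rw [this, L1 N (R+1) _ (by rw [u.2]; omega), u.2]
    have h1 : R + 1 - R = 1 := by omega
    rw [h1, Nat.choose_one_right]
    have h2 : (N - R : ℕ) = (N - (R+1) : ℕ) + 1 := by omega
    rw [h2]
    push_cast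
    simp [hi]
  · have : (univ.filter (fun t : JohnsonVertex N (R+1) =>
        (u : Finset (Fin N)) ⊆ (t : Finset (Fin N)) ∧ i ∈ (t : Finset (Fin N))))
        = (univ.filter (fun t : JohnsonVertex N (R+1) =>
        insert i (u : Finset (Fin N)) ⊆ (t : Finset (Fin N)))) := by
      apply Finset.filter_congr
      intro t _
      rw [Finset.insert_subset_iff]
      tauto
    rw [this, L1 N (R+1) _ (by rw [Finset.card_insert_of_notMem hi, u.2]),
      Finset.card_insert_of_notMem hi, u.2]
    simp [hi]

/-- the indicator eigenvector identity:  A·x = ((N-R-1)R - (R+1))·x + (R+1)·𝟙  -/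
lemma A_mulVec_ind (N R : ℕ) (hRN : R + 1 ≤ N) (i : Fin N) :
    (adjM N (R+1)).mulVec (fun s : JohnsonVertex N (R+1) =>
        if i ∈ (s : Finset (Fin N)) then (1:ℝ) else 0)
      = (fun s : JohnsonVertex N (R+1) => (((N - (R+1) : ℕ) : ℝ) * (R : ℝ) - ((R:ℝ)+1))
          * (if i ∈ (s : Finset (Fin N)) then (1:ℝ) else 0) + ((R:ℝ)+1)) := by
  set x : JohnsonVertex N (R+1) → ℝ :=
    fun s => if i ∈ (s : Finset (Fin N)) then (1:ℝ) else 0 with hx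
  have hWt : (incM N R)ᵀ.mulVec x = (fun u : JohnsonVertex N R =>
      ((N - (R+1) : ℕ) : ℝ) * (if i ∈ (u : Finset (Fin N)) then 1 else 0) + 1) := by
    funext u
    rw [← count_sup_mem N R hRN u i]
    simp only [Matrix.mulVec, dotProduct, Matrix.transpose_apply, incM, hx]
    rw [← Finset.sum_boole]
    apply Finset.sum_congr rfl
    intro t _
    split_ifs <;> simp_all
  have hW : (incM N R).mulVec ((incM N R)ᵀ.mulVec x) = (fun s : JohnsonVertex N (R+1) =>
      ((N - (R+1) : ℕ) : ℝ) * (R : ℝ) * x s + ((R:ℝ)+1)) := by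
    rw [hWt]
    funext s
    simp only [Matrix.mulVec, dotProduct, incM]
    have hsplit : ∀ u : JohnsonVertex N R,
        (if (u : Finset (Fin N)) ⊆ (s : Finset (Fin N)) then (1:ℝ) else 0)
          * (((N - (R+1) : ℕ) : ℝ) * (if i ∈ (u : Finset (Fin N)) then 1 else 0) + 1)
        = ((N - (R+1) : ℕ) : ℝ) * (if ((u : Finset (Fin N)) ⊆ (s : Finset (Fin N))
              ∧ i ∈ (u : Finset (Fin N))) then (1:ℝ) else 0)
          + (if (u : Finset (Fin N)) ⊆ (s : Finset (Fin N)) then (1:ℝ) else 0) := by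
      intro u
      split_ifs <;> simp_all <;> try ring
    rw [Finset.sum_congr rfl (fun u _ => hsplit u), Finset.sum_add_distrib,
      ← Finset.mul_sum, Finset.sum_boole, Finset.sum_boole, L0, s.2,
      Nat.choose_succ_self_right]
    by_cases hi : i ∈ (s : Finset (Fin N))
    · rw [count_sub_mem N R s i hi]
      simp only [hx, hi, if_pos]
      push_cast
      ring
    · have hempty : (univ.filter (fun u : JohnsonVertex N R =>
          (u : Finset (Fin N)) ⊆ (s : Finset (Fin N)) ∧ i ∈ (u : Finset (Fin N)))) = ∅ := by
        rw [Finset.filter_eq_empty_iff]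
        intro u _ h
        exact hi (h.1 h.2)
      rw [hempty]
      simp only [hx, hi, if_neg, not_false_iff]
      push_cast
      simp
  have hA : (adjM N (R+1)).mulVec x
      = ((incM N R) * (incM N R)ᵀ).mulVec x - (((R:ℝ)+1) • x) := by
    rw [I1, Matrix.add_mulVec, Matrix.smul_mulVec, Matrix.one_mulVec]
    funext s
    simp only [Pi.add_apply, Pi.sub_apply, Pi.smul_apply, smul_eq_mul]
    ring
  rw [hA, ← Matrix.mulVec_mulVec, hW]
  funext s
  simp only [Pi.sub_apply, Pi.smul_apply, smul_eq_mul]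
  ring

lemma key (N : ℕ) : ∀ (R : ℕ), R ≤ N → ∀ (μ : ℝ) (v : JohnsonVertex N R → ℝ),
    v ≠ 0 → (∑ s, v s) = 0 → (adjM N R).mulVec v = μ • v →
    μ ≤ (R : ℝ) * ((N : ℝ) - (R : ℝ)) - (N : ℝ) := by
  intro R
  induction R with
  | zero =>
    intro _ μ v hv hsum _
    exfalso; apply hv
    have hun : ∀ s t : JohnsonVertex N 0, s = t := by
      intro s t
      exact Subtype.ext (by rw [Finset.card_eq_zero.mp s.2, Finset.card_eq_zero.mp t.2])
    funext s
    have h1 : ∑ t : JohnsonVertex N 0, v t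
        = (Fintype.card (JohnsonVertex N 0) : ℝ) * v s := by
      calc ∑ t : JohnsonVertex N 0, v t
          = ∑ _t : JohnsonVertex N 0, v s :=
            Finset.sum_congr rfl (fun t _ => by rw [hun t s])
        _ = (Fintype.card (JohnsonVertex N 0) : ℝ) * v s := by
            rw [Finset.sum_const, nsmul_eq_mul]; rfl
    have hpos : 0 < Fintype.card (JohnsonVertex N 0) :=
      Fintype.card_pos_iff.mpr ⟨⟨∅, rfl⟩⟩
    rw [hsum] at h1
    have : v s = 0 := by
      rcases mul_eq_zero.mp h1.symm with h | h
      · exact absurd h (by positivity)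
      · exact h
    simpa using this
  | succ R ih =>
    intro hRN μ v hv hsum hev
    have hRN' : R ≤ N := by omega
    set W := incM N R with hWdef
    have hWWt : (W * Wᵀ).mulVec v = (μ + ((R:ℝ)+1)) • v := by
      rw [I1, Matrix.add_mulVec, hev, Matrix.smul_mulVec, Matrix.one_mulVec]
      funext s
      simp only [Pi.add_apply, Pi.smul_apply, smul_eq_mul]
      ring
    set w := Wᵀ.mulVec v with hw
    by_cases hw0 : w = 0
    · have hzero : (μ + ((R:ℝ)+1)) • v = 0 := by
        rw [← hWWt, ← Matrix.mulVec_mulVec, ← hw, hw0, Matrix.mulVec_zero]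
      have hμ : μ + ((R:ℝ)+1) = 0 := by
        by_contra hne
        apply hv
        rcases smul_eq_zero.mp hzero with h | h
        · exact absurd h hne
        · exact absurd h hv
      have hNc : ((R:ℝ)+1) ≤ (N:ℝ) := by exact_mod_cast hRN
      push_cast
      nlinarith [hμ, hNc, mul_nonneg (show (0:ℝ) ≤ (R:ℝ) by positivity)
        (show (0:ℝ) ≤ (N:ℝ) - (R:ℝ) - 1 by linarith)]
    · have hWtW : (adjM N R).mulVec w = (μ + ((R:ℝ)+1) - ((N - R : ℕ) : ℝ)) • w := by
        have h1 : (Wᵀ * W).mulVec w = (μ + ((R:ℝ)+1)) • w := by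
          rw [hw, Matrix.mulVec_mulVec, Matrix.mul_assoc, ← Matrix.mulVec_mulVec, hWWt,
            Matrix.mulVec_smul]
        have h2 := I2 N R
        rw [h2, Matrix.add_mulVec, Matrix.smul_mulVec, Matrix.one_mulVec] at h1
        funext u
        have := congrFun h1 u
        simp only [Pi.add_apply, Pi.smul_apply, smul_eq_mul] at this ⊢
        linarith
      have hwsum : (∑ u, w u) = 0 := by
        have : ∀ u : JohnsonVertex N R, w u = ∑ s, W s u * v s := by
          intro u
          rw [hw]
          simp only [Matrix.mulVec, dotProduct, Matrix.transpose_apply]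
        rw [Finset.sum_congr rfl (fun u _ => this u), Finset.sum_comm]
        have : ∀ s : JohnsonVertex N (R+1), (∑ u : JohnsonVertex N R, W s u * v s)
            = ((R:ℝ)+1) * v s := by
          intro s
          rw [← Finset.sum_mul, Wrow]
        rw [Finset.sum_congr rfl (fun s _ => this s), ← Finset.mul_sum, hsum, mul_zero]
      have hkey := ih hRN' _ w hw0 hwsum hWtW
      have hcast : ((N - R : ℕ) : ℝ) = (N:ℝ) - (R:ℝ) := by
        rw [Nat.cast_sub hRN']
      rw [hcast] at hkey
      push_cast
      nlinarith [hkey]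

lemma adj_comm (N R : ℕ) (s t : JohnsonVertex N R) :
    johnsonAdj N R s t ↔ johnsonAdj N R t s := by
  unfold johnsonAdj
  rw [Finset.inter_comm, ne_comm]

lemma deg (N R : ℕ) (hRN : R + 1 ≤ N) (s : JohnsonVertex N (R+1)) :
    (univ.filter fun t => johnsonAdj N (R+1) s t).card = (R+1) * (N - (R+1)) := by
  have h0 : ∑ t, adjM N (R+1) s t
      = ((univ.filter fun t => johnsonAdj N (R+1) s t).card : ℝ) := by
    simp only [adjM]
    rw [Finset.sum_boole]
  have h2 : ∑ t, ((incM N R) * (incM N R)ᵀ) s t = ((R:ℝ)+1) * ((N-R:ℕ):ℝ) := by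
    simp only [Matrix.mul_apply, Matrix.transpose_apply]
    rw [Finset.sum_comm]
    have h : ∀ u : JohnsonVertex N R,
        (∑ t : JohnsonVertex N (R+1), incM N R s u * incM N R t u)
          = incM N R s u * ((N-R:ℕ):ℝ) := by
      intro u
      rw [← Finset.mul_sum, Wcol]
    rw [Finset.sum_congr rfl (fun u _ => h u), ← Finset.sum_mul, Wrow]
  have h3 : ∑ t, ((incM N R) * (incM N R)ᵀ) s t
      = (∑ t, adjM N (R+1) s t) + ((R:ℝ)+1) := by
    rw [I1]
    simp only [Matrix.add_apply, Finset.sum_add_distrib]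
    congr 1
    simp only [Matrix.smul_apply, Matrix.one_apply, smul_eq_mul]
    rw [Finset.sum_congr rfl (fun t _ => by rw [mul_ite, mul_one, mul_zero]),
      Finset.sum_ite_eq univ s (fun _ => ((R:ℝ)+1))]
    simp
  have hcast : (((R+1) * (N - (R+1)) : ℕ) : ℝ)
      = ((R:ℝ)+1) * ((N-R:ℕ):ℝ) - ((R:ℝ)+1) := by
    have h4 : (N - R : ℕ) = (N - (R+1)) + 1 := by omega
    rw [Nat.cast_mul, h4]
    push_cast
    ring
  have : ((univ.filter fun t => johnsonAdj N (R+1) s t).card : ℝ)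
      = (((R+1) * (N - (R+1)) : ℕ) : ℝ) := by
    rw [hcast, ← h0]
    linarith [h2, h3]
  exact_mod_cast this

lemma A_mulVec_one (N R : ℕ) (hRN : R+1 ≤ N) :
    (adjM N (R+1)).mulVec (fun _ => (1:ℝ))
      = fun _ => (((R+1) * (N - (R+1)) : ℕ) : ℝ) := by
  funext s
  simp only [Matrix.mulVec, dotProduct, mul_one, adjM]
  rw [Finset.sum_boole, deg N R hRN s]

lemma walk_eq (N R : ℕ) :
    johnsonWalk N R = (((R * (N - R) : ℕ) : ℝ)⁻¹) • adjM N R := by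
  ext s t
  simp only [johnsonWalk, adjM, Matrix.smul_apply, smul_eq_mul]
  split_ifs <;> simp

end JP

open JP in
/-- The Johnson graph `J(N,R)` is regular of degree `R(N-R)` and the spectral gap
of its normalized walk matrix is `N/(R(N-R))`: the largest eigenvalue different
from `1` is exactly `1 - N/(R(N-R))`. -/
theorem johnson_graph_regular_and_spectral_gap (N R : ℕ) (hR : 1 ≤ R) (hRN : R ≤ N - 1) :
    (∀ s : JohnsonVertex N R,
        (Finset.univ.filter fun t => johnsonAdj N R s t).card = R * (N - R)) ∧
    IsGreatest {μ : ℝ | μ ≠ 1 ∧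
        Module.End.HasEigenvalue (Matrix.toLin' (johnsonWalk N R)) μ}
      (1 - (N : ℝ) / ((R : ℝ) * ((N : ℝ) - (R : ℝ)))) := by
  obtain ⟨R₀, rfl⟩ : ∃ R₀, R = R₀ + 1 := ⟨R - 1, by omega⟩
  have hN2 : R₀ + 2 ≤ N := by omega
  have hN1 : R₀ + 1 ≤ N := by omega
  set d : ℕ := (R₀+1) * (N - (R₀+1)) with hd
  have hdpos : 0 < d := by
    apply Nat.mul_pos <;> omega
  have hdR : (d : ℝ) = (((R₀+1 : ℕ)):ℝ) * ((N:ℝ) - (((R₀+1:ℕ)):ℝ)) := by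
    rw [hd, Nat.cast_mul, Nat.cast_sub hN1]
  have hdpos' : (0:ℝ) < (d:ℝ) := by exact_mod_cast hdpos
  have hdne : (d:ℝ) ≠ 0 := ne_of_gt hdpos'
  have hNpos : (0:ℝ) < (N:ℝ) := by
    have : 0 < N := by omega
    exact_mod_cast this
  constructor
  · intro s
    exact deg N R₀ hN1 s
  have hrepr : (1:ℝ) - (N : ℝ) / ((((R₀+1:ℕ)) : ℝ) * ((N : ℝ) - (((R₀+1:ℕ)) : ℝ)))
      = 1 - (N:ℝ)/(d:ℝ) := by rw [hdR]
  rw [hrepr]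
  have hμ0ne : (1:ℝ) - (N:ℝ)/(d:ℝ) ≠ 1 := by
    have : 0 < (N:ℝ)/(d:ℝ) := div_pos hNpos hdpos'
    intro h
    have := sub_eq_self.mp h
    linarith
  constructor
  · -- membership
    refine ⟨hμ0ne, ?_⟩
    set i0 : Fin N := ⟨0, by omega⟩ with hi0
    set x : JohnsonVertex N (R₀+1) → ℝ :=
      fun s => if i0 ∈ (s : Finset (Fin N)) then 1 else 0 with hx
    set v : JohnsonVertex N (R₀+1) → ℝ :=
      fun s => x s - ((R₀:ℝ)+1)/(N:ℝ) with hv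
    have hAv : (adjM N (R₀+1)).mulVec v = ((d:ℝ) - N) • v := by
      have hsplitv : v = x + (-(((R₀:ℝ)+1)/(N:ℝ))) • (fun _ => (1:ℝ)) := by
        funext s
        simp only [hv, Pi.add_apply, Pi.smul_apply, smul_eq_mul]
        ring
      rw [hsplitv, Matrix.mulVec_add, Matrix.mulVec_smul, A_mulVec_ind N R₀ hN1 i0,
        A_mulVec_one N R₀ hN1]
      funext s
      simp only [Pi.add_apply, Pi.smul_apply, smul_eq_mul, hx]
      have hc1 : ((N - (R₀+1) : ℕ):ℝ) = (N:ℝ) - ((R₀:ℝ)+1) := by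
        rw [Nat.cast_sub hN1]; push_cast; ring
      have hc2 : (((R₀+1) * (N - (R₀+1)) : ℕ) : ℝ) = (d:ℝ) := by rw [← hd]
      rw [hc1, hc2, hdR]
      push_cast
      have hNne : (N:ℝ) ≠ 0 := ne_of_gt hNpos
      by_cases hmem : i0 ∈ (s : Finset (Fin N))
      · simp only [hmem, if_pos]
        field_simp
        ring
      · simp only [hmem, if_neg, not_false_iff]
        field_simp
        ring
    obtain ⟨s₀, hs₀i, -, hs₀c⟩ := Finset.exists_subsuperset_card_eq
      (s := {i0}) (t := (univ : Finset (Fin N))) (n := R₀+1)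
      (Finset.subset_univ {i0}) (by rw [Finset.card_singleton]; omega)
      (by rw [Finset.card_univ, Fintype.card_fin]; omega)
    have hvne : v ≠ 0 := by
      intro h
      have h1 := congrFun h ⟨s₀, hs₀c⟩
      have hmem : i0 ∈ s₀ := Finset.singleton_subset_iff.mp hs₀i
      simp only [hv, hx, Pi.zero_apply, hmem, if_pos] at h1
      have hNR : ((R₀:ℝ)+1) < (N:ℝ) := by exact_mod_cast hN2
      have hNne : (N:ℝ) ≠ 0 := ne_of_gt hNpos
      rw [sub_eq_zero] at h1
      rw [eq_div_iff hNne] at h1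
      linarith
    have hwv : (johnsonWalk N (R₀+1)).mulVec v = (1 - (N:ℝ)/(d:ℝ)) • v := by
      rw [walk_eq, Matrix.smul_mulVec, hAv]
      funext s
      simp only [Pi.smul_apply, smul_eq_mul]
      have hc2 : (((R₀+1) * (N - (R₀+1)) : ℕ) : ℝ) = (d:ℝ) := by rw [← hd]
      rw [hc2]
      field_simp
    exact Module.End.hasEigenvalue_of_hasEigenvector
      ⟨Module.End.mem_eigenspace_iff.mpr (by rw [Matrix.toLin'_apply, hwv]), hvne⟩
  · -- upper bound
    rintro μ ⟨hμ1, hμe⟩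
    obtain ⟨v, hv⟩ := hμe.exists_hasEigenvector
    have hv2 : v ≠ 0 := hv.2
    have hwv : (johnsonWalk N (R₀+1)).mulVec v = μ • v := by
      have h := Module.End.mem_eigenspace_iff.mp hv.1
      rwa [Matrix.toLin'_apply] at h
    have hAv : (adjM N (R₀+1)).mulVec v = ((d:ℝ) * μ) • v := by
      rw [walk_eq] at hwv
      funext s
      have h := congrFun hwv s
      simp only [Matrix.smul_mulVec, Pi.smul_apply, smul_eq_mul] at h
      have hc2 : (((R₀+1) * (N - (R₀+1)) : ℕ) : ℝ) = (d:ℝ) := by rw [← hd]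
      rw [hc2] at h
      have h5 : (adjM N (R₀+1)).mulVec v s
          = (d:ℝ) * ((d:ℝ)⁻¹ * (adjM N (R₀+1)).mulVec v s) := by
        field_simp
      rw [h5, h]
      simp only [Pi.smul_apply, smul_eq_mul]
      ring
    have hsum : (∑ s, v s) = 0 := by
      have hrow : ∀ t : JohnsonVertex N (R₀+1),
          (∑ s, adjM N (R₀+1) s t) = (d:ℝ) := by
        intro t
        have h6 : ∀ s : JohnsonVertex N (R₀+1),
            adjM N (R₀+1) s t = adjM N (R₀+1) t s := by
          intro s
          simp only [adjM]
          exact if_congr (adj_comm N (R₀+1) s t) rfl rfl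
        rw [Finset.sum_congr rfl (fun s _ => h6 s)]
        have h7 := congrFun (A_mulVec_one N R₀ hN1) t
        simp only [Matrix.mulVec, dotProduct, mul_one] at h7
        rw [h7, ← hd]
      have h1 : ∑ s, ((adjM N (R₀+1)).mulVec v) s = (d:ℝ) * ∑ s, v s := by
        simp only [Matrix.mulVec, dotProduct]
        rw [Finset.sum_comm]
        have h8 : ∀ t : JohnsonVertex N (R₀+1),
            (∑ s : JohnsonVertex N (R₀+1), adjM N (R₀+1) s t * v t)
              = (d:ℝ) * v t := by
          intro t
          rw [← Finset.sum_mul, hrow]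
        rw [Finset.sum_congr rfl (fun t _ => h8 t), ← Finset.mul_sum]
      have h2 : ∑ s, ((adjM N (R₀+1)).mulVec v) s = (d:ℝ) * μ * ∑ s, v s := by
        rw [hAv]
        simp only [Pi.smul_apply, smul_eq_mul]
        rw [← Finset.mul_sum]
      have h12 : (d:ℝ) * ∑ s, v s = (d:ℝ) * μ * ∑ s, v s := by rw [← h1, h2]
      have h3 : ((d:ℝ)*(1-μ)) * (∑ s, v s)
          = (d:ℝ) * (∑ s, v s) - ((d:ℝ) * μ * (∑ s, v s)) := by ring
      rw [h12, sub_self] at h3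
      rcases mul_eq_zero.mp h3 with h | h
      · exfalso
        rcases mul_eq_zero.mp h with h' | h'
        · exact hdne h'
        · exact hμ1 (by linarith [sub_eq_zero.mp h'])
      · exact h
    have hk := key N (R₀+1) hN1 ((d:ℝ)*μ) v hv2 hsum hAv
    have hk' : (d:ℝ)*μ ≤ (d:ℝ) - N := by
      rw [← hdR] at hk
      exact hk
    have hgoal : (d:ℝ) * (1 - (N:ℝ)/(d:ℝ)) = (d:ℝ) - N := by field_simp
    exact le_of_mul_le_mul_left (by rw [hgoal]; exact hk') hdpos'
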